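/- Define ℓ(a,b) := LCS((10)^⟨a⟩, (0110)^⟨b⟩). For all integers a ≥ 3 and even b ≥ 2: ℓ(a,b) = max(1 + ℓ(a−1, b−2), 2 + ℓ(a−3, b−2)). -/

import Mathlib

/-- Length of a longest common subsequence of two binary words. -/
noncomputable def LCSlen (u v : List Bool) : ℕ :=
  sSup {m : ℕ | ∃ w : List Bool, w.Sublist u ∧ w.Sublist v ∧ w.length = m}

/-- Length of a shortest common supersequence of two binary words. -/
noncomputable def SCSlen (u v : List Bool) : ℕ :=
  sInf {m : ℕ | ∃ w : List Bool, u.Sublist w ∧ v.Sublist w ∧ w.length = m}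

/-- Deletion distance between two words of equal length `n`: `n - LCS`. -/
noncomputable def delDist (u v : List Bool) : ℕ := u.length - LCSlen u v

/-- Number of distinct longest common subsequences. -/
noncomputable def mLCS (u v : List Bool) : ℕ :=
  Set.ncard {w : List Bool | w.Sublist u ∧ w.Sublist v ∧ w.length = LCSlen u v}

/-- Number of distinct shortest common supersequences. -/
noncomputable def mSCS (u v : List Bool) : ℕ :=
  Set.ncard {w : List Bool | u.Sublist w ∧ v.Sublist w ∧ w.length = SCSlen u v}

/-- `repPrefix x m` is the prefix of length `m` of the infinite periodic word `xxx⋯`. -/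
def repPrefix (x : List Bool) (m : ℕ) : List Bool :=
  (List.flatten (List.replicate m x)).take m
/-! The closed form is `ℓ(a, b) = min a (min b ((2a + b) / 4))`. To prove it by induction along
the usual LCS recursion (match equal first letters, otherwise drop one of them), it is stated for
windows of `(10)^ω` and `(0110)^ω` starting at arbitrary positions `q` and `p`; the answer then
depends only on the phase `(p + 1 + 2q) % 4`, and the first letters agree exactly when this phase
is at least 2. The recurrence is an arithmetic identity for the closed form. -/

open List

theorem bddAbove_LCSlen_set (u v : List Bool) :
    BddAbove {m : ℕ | ∃ w : List Bool, w <+ u ∧ w <+ v ∧ w.length = m} := by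
  refine ⟨u.length, ?_⟩
  rintro _ ⟨w, hu, -, rfl⟩
  exact hu.length_le

theorem length_le_LCSlen {w u v : List Bool} (hu : w <+ u) (hv : w <+ v) :
    w.length ≤ LCSlen u v :=
  le_csSup (bddAbove_LCSlen_set u v) ⟨w, hu, hv, rfl⟩

theorem exists_sublist_length_eq_LCSlen (u v : List Bool) :
    ∃ w : List Bool, w <+ u ∧ w <+ v ∧ w.length = LCSlen u v :=
  Nat.sSup_mem (s := {m : ℕ | ∃ w : List Bool, w <+ u ∧ w <+ v ∧ w.length = m})
    ⟨0, [], nil_sublist u, nil_sublist v, rfl⟩ (bddAbove_LCSlen_set u v)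

@[simp]
theorem LCSlen_nil_left (v : List Bool) : LCSlen [] v = 0 := by
  obtain ⟨w, hu, -, hw⟩ := exists_sublist_length_eq_LCSlen [] v
  rw [← hw, sublist_nil.mp hu, length_nil]

@[simp]
theorem LCSlen_nil_right (u : List Bool) : LCSlen u [] = 0 := by
  obtain ⟨w, -, hv, hw⟩ := exists_sublist_length_eq_LCSlen u []
  rw [← hw, sublist_nil.mp hv, length_nil]

theorem LCSlen_cons_cons_self (x : Bool) (u v : List Bool) :
    LCSlen (x :: u) (x :: v) = LCSlen u v + 1 := by
  refine le_antisymm ?_ ?_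
  · obtain ⟨w, hu, hv, hw⟩ := exists_sublist_length_eq_LCSlen (x :: u) (x :: v)
    rw [← hw]
    cases w with
    | nil => exact Nat.zero_le _
    | cons z w => exact Nat.succ_le_succ (length_le_LCSlen hu.of_cons_cons hv.of_cons_cons)
  · obtain ⟨w, hu, hv, hw⟩ := exists_sublist_length_eq_LCSlen u v
    exact hw ▸ length_le_LCSlen (hu.cons_cons x) (hv.cons_cons x)

theorem LCSlen_cons_cons_of_ne {x y : Bool} (hxy : x ≠ y) (u v : List Bool) :
    LCSlen (x :: u) (y :: v) = max (LCSlen u (y :: v)) (LCSlen (x :: u) v) := by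
  refine le_antisymm ?_ (max_le ?_ ?_)
  · obtain ⟨w, hu, hv, hw⟩ := exists_sublist_length_eq_LCSlen (x :: u) (y :: v)
    rw [← hw]
    cases w with
    | nil => exact Nat.zero_le _
    | cons z w =>
      by_cases hzx : z = x
      · subst hzx
        exact le_max_of_le_right (length_le_LCSlen hu (hv.of_cons_of_ne hxy))
      · exact le_max_of_le_left (length_le_LCSlen (hu.of_cons_of_ne hzx) hv)
  · obtain ⟨w, hu, hv, hw⟩ := exists_sublist_length_eq_LCSlen u (y :: v)
    exact hw ▸ length_le_LCSlen (hu.cons x) hv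
  · obtain ⟨w, hu, hv, hw⟩ := exists_sublist_length_eq_LCSlen (x :: u) v
    exact hw ▸ length_le_LCSlen hu (hv.cons y)

theorem flatten_replicate_eq_map_range' {x : List Bool} {f : ℕ → Bool}
    (hf : Function.Periodic f x.length) (hx : (range' 0 x.length).map f = x) (n : ℕ) :
    (replicate n x).flatten = (range' 0 (n * x.length)).map f := by
  induction n with
  | zero => simp
  | succ n ih =>
    have hshift :
        (range' x.length (n * x.length)).map f = (range' 0 (n * x.length)).map f := by
      rw [← Nat.add_zero x.length, ← map_add_range', map_map]
      congr 1
      funext i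
      simp [Function.comp, add_comm, hf i]
    rw [replicate_succ, flatten_cons, ih, Nat.succ_mul, add_comm, ← range'_append_1, map_append,
      hx, Nat.zero_add, hshift]

theorem repPrefix_eq_map_range' {x : List Bool} (hne : x ≠ []) {f : ℕ → Bool}
    (hf : Function.Periodic f x.length) (hx : (range' 0 x.length).map f = x) (m : ℕ) :
    repPrefix x m = (range' 0 m).map f := by
  have hm : m ≤ m * x.length := Nat.le_mul_of_pos_right m (length_pos_iff.mpr hne)
  rw [repPrefix, flatten_replicate_eq_map_range' hf hx, ← map_take, take_range'_of_length_ge hm]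

def bit10 (i : ℕ) : Bool := i % 2 = 0

def bit0110 (i : ℕ) : Bool := i % 4 = 1 ∨ i % 4 = 2

theorem repPrefix_10 (a : ℕ) : repPrefix [true, false] a = (range' 0 a).map bit10 :=
  repPrefix_eq_map_range' (by simp) (fun i => by simp [bit10, Nat.add_mod_right]) rfl a

theorem repPrefix_0110 (b : ℕ) :
    repPrefix [false, true, true, false] b = (range' 0 b).map bit0110 :=
  repPrefix_eq_map_range' (by simp) (fun i => by simp [bit0110, Nat.add_mod_right]) rfl b

theorem bit10_eq_bit0110_iff (q p : ℕ) : bit10 q = bit0110 p ↔ 2 ≤ (p + 1 + 2 * q) % 4 := by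
  simp only [bit10, bit0110, decide_eq_decide]
  omega

def lcsFormula (t n m : ℕ) : ℕ := min n (min m ((2 * n + m + t - 1) / 4))

theorem lcsFormula_succ_succ_of_two_le {t : ℕ} (ht : 2 ≤ t) (ht' : t < 4) (n m : ℕ) :
    lcsFormula t (n + 1) (m + 1) = lcsFormula (t - 1) n m + 1 := by
  unfold lcsFormula
  interval_cases t <;> omega

theorem lcsFormula_succ_succ_of_lt_two {t : ℕ} (ht : t < 2) (n m : ℕ) :
    lcsFormula t (n + 1) (m + 1) =
      max (lcsFormula (t + 2) n (m + 1)) (lcsFormula (t + 1) (n + 1) m) := by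
  unfold lcsFormula
  interval_cases t <;> omega

theorem LCSlen_bit10_bit0110 (q p n m : ℕ) :
    LCSlen ((range' q n).map bit10) ((range' p m).map bit0110) =
      lcsFormula ((p + 1 + 2 * q) % 4) n m := by
  induction n generalizing q p m with
  | zero => simp [lcsFormula]
  | succ n ihn =>
    induction m generalizing q p with
    | zero => simp [lcsFormula]
    | succ m ihm =>
      have map_range'_succ (f : ℕ → Bool) (s k : ℕ) :
          (range' s (k + 1)).map f = f s :: (range' (s + 1) k).map f := rfl
      rw [map_range'_succ bit10, map_range'_succ bit0110]
      by_cases h : bit10 q = bit0110 p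
      · have ht := (bit10_eq_bit0110_iff q p).mp h
        rw [h, LCSlen_cons_cons_self, ihn,
          lcsFormula_succ_succ_of_two_le ht (Nat.mod_lt _ (by norm_num))]
        congr 2
        omega
      · have ht := lt_of_not_ge (mt (bit10_eq_bit0110_iff q p).mpr h)
        rw [LCSlen_cons_cons_of_ne h, ← map_range'_succ, ← map_range'_succ, ihn, ihm,
          lcsFormula_succ_succ_of_lt_two ht]
        congr 2 <;> omega

theorem LCSlen_repPrefix_10_0110 (a b : ℕ) :
    LCSlen (repPrefix [true, false] a) (repPrefix [false, true, true, false] b) =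
      lcsFormula 1 a b := by
  rw [repPrefix_10, repPrefix_0110, LCSlen_bit10_bit0110]

theorem stmt17_general (a b : ℕ) (ha : 3 ≤ a) (hb : 2 ≤ b) :
    LCSlen (repPrefix [true, false] a) (repPrefix [false, true, true, false] b)
      = max (1 + LCSlen (repPrefix [true, false] (a - 1))
                (repPrefix [false, true, true, false] (b - 2)))
            (2 + LCSlen (repPrefix [true, false] (a - 3))
                (repPrefix [false, true, true, false] (b - 2))) := by
  simp only [LCSlen_repPrefix_10_0110, lcsFormula]
  omega

theorem stmt17 (a b : ℕ) (ha : 3 ≤ a) (hb : 2 ≤ b) (hbe : Even b) :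
    LCSlen (repPrefix [true, false] a) (repPrefix [false, true, true, false] b)
      = max (1 + LCSlen (repPrefix [true, false] (a - 1))
                (repPrefix [false, true, true, false] (b - 2)))
            (2 + LCSlen (repPrefix [true, false] (a - 3))
                (repPrefix [false, true, true, false] (b - 2))) :=
  stmt17_general a b ha hb
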